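/- arXiv:1602.08564 — 2 statements merged into one kernel-verified Lean document; each statement's English description precedes it below -/
import Mathlib

section
/- Let G be an infinite amenable group and T an irreducible finite tiling of G. Then for every shape S₀ of T and every n ∈ ℕ, there exist a finite set T₀ ⊆ G and ε > 0 such that every (T₀, ε)-invariant finite subset F of G contains at least n distinct tiles of T with shape S₀. -/
open Filter Topology Pointwise ENNReal

/-- A Følner sequence for a group `G`. -/
def IsFolnerSeq (G : Type*) [Group G] (F : ℕ → Finset G) : Prop :=
  (∀ n, (F n).Nonempty) ∧
    ∀ g : G, Filter.Tendsto
      (fun n => ((symmDiff (g • ((F n) : Set G)) ((F n) : Set G)).ncard : ℝ) / (F n).card)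
      Filter.atTop (nhds 0)

/-- A group is amenable if it admits a Følner sequence. -/
def IsAmenable (G : Type*) [Group G] : Prop := ∃ F : ℕ → Finset G, IsFolnerSeq G F

variable {G : Type*} [Group G]

/-- The `K`-boundary of a finite set `A`. -/
def kBoundary (A K : Finset G) : Set G :=
  {g : G | (∃ k ∈ K, k * g ∈ A) ∧ ∃ k ∈ K, k * g ∉ A}

/-- `A` is `(K, δ)`-invariant. -/
def InvariantSet (A K : Finset G) (δ : ℝ) : Prop :=
  ((kBoundary A K).ncard : ℝ) < δ * A.card

/-- A subset of a group is syndetic if finitely many translates cover the group. -/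
def Syndetic (A : Set G) : Prop := ∃ F : Finset G, (F : Set G) * A = Set.univ

/-- A finite tiling of a group `G`: a partition of `G` into right translates of
finitely many finite shapes, each shape containing the identity. -/
structure FiniteTiling (G : Type*) [Group G] where
  tiles : Set (Set G)
  shapes : Finset (Finset G)
  covers : ∀ g : G, ∃! t, t ∈ tiles ∧ g ∈ t
  tile_shape : ∀ t ∈ tiles, ∃ S ∈ shapes, ∃ c : G, t = (S : Set G) * {c}
  one_mem_shape : ∀ S ∈ shapes, (1 : G) ∈ S

/-- The set of centers of a shape `S` in a tiling. -/
def FiniteTiling.center (T : FiniteTiling G) (S : Finset G) : Set G :=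
  {c : G | ((S : Set G) * {c}) ∈ T.tiles}

/-- A finite tiling is irreducible if every sufficiently invariant finite set
contains a tile of every shape. -/
def FiniteTiling.IsIrreducible (T : FiniteTiling G) : Prop :=
  ∃ (T₀ : Finset G) (ε : ℝ), 0 < ε ∧
    ∀ F : Finset G, InvariantSet F T₀ ε →
      ∀ S ∈ T.shapes, ∃ c ∈ T.center S, (S : Set G) * {c} ⊆ (F : Set G)

/-- The shift action of `G` on `A^G`: `(c • x) g = x (g * c)`. -/
def shiftAct {A : Type*} (c : G) (x : G → A) : G → A := fun g => x (g * c)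

instance : TopologicalSpace (Option (Finset G)) := ⊥

open Classical in
/-- The point of `(S(T) ∪ {0})^G` encoding the centers of a tiling. -/
noncomputable def FiniteTiling.point (T : FiniteTiling G) : G → Option (Finset G) :=
  fun g => if h : ∃ S, S ∈ T.shapes ∧ g ∈ T.center S then some h.choose else none

/-- The subshift associated with a finite tiling: the orbit closure of `T.point`. -/
noncomputable def FiniteTiling.subshift (T : FiniteTiling G) : Set (G → Option (Finset G)) :=
  closure (Set.range fun c : G => shiftAct c T.point)

/-- `T₂` is primely congruent with `T₁`: tiles of `T₂` are unions of tiles of `T₁`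
and each shape of `T₂` has a unique master partition by tiles of `T₁`. -/
def PrimelyCongruent (T₁ T₂ : FiniteTiling G) : Prop :=
  (∀ t₁ ∈ T₁.tiles, ∀ t₂ ∈ T₂.tiles, (t₁ ∩ t₂).Nonempty → t₁ ⊆ t₂) ∧
  ∀ S ∈ T₂.shapes, ∀ c c' : G, c ∈ T₂.center S → c' ∈ T₂.center S →
    {u : Set G | ∃ t ∈ T₁.tiles, t ⊆ (S : Set G) * {c} ∧ u = t * {c⁻¹}} =
    {u : Set G | ∃ t ∈ T₁.tiles, t ⊆ (S : Set G) * {c'} ∧ u = t * {c'⁻¹}}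

/-- Number of patterns of a subshift on a finite window `F`. -/
noncomputable def patternCount {A : Type*} (X : Set (G → A)) (F : Finset G) : ℕ :=
  {p : ↑F → A | ∃ x ∈ X, ∀ g : ↑F, x (g : G) = p g}.ncard

section Dim

variable {Y : Type*} [TopologicalSpace Y]

/-- `β` is a finite open cover of the set `X`. -/
def IsOpenCoverOf (X : Set Y) (β : Finset (Set Y)) : Prop :=
  (∀ U ∈ β, IsOpen U) ∧ X ⊆ ⋃ U ∈ β, U

/-- The order of a finite cover on a set `X`. -/
noncomputable def ordOn (X : Set Y) (β : Finset (Set Y)) : ℕ :=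
  ⨆ y : X, ({U : Set Y | U ∈ β ∧ (y : Y) ∈ U}.ncard - 1)

/-- `D(α)`: minimal order among finite open covers of `X` refining `α`. -/
noncomputable def Dcov (X : Set Y) (α : Finset (Set Y)) : ℕ :=
  sInf {n | ∃ β : Finset (Set Y), IsOpenCoverOf X β ∧
    (∀ U ∈ β, ∃ V ∈ α, U ⊆ V) ∧ ordOn X β = n}

/-- The topological (covering) dimension of a subset `X` of a topological space. -/
noncomputable def topDim (X : Set Y) : ℕ∞ :=
  ⨆ α ∈ {α : Finset (Set Y) | IsOpenCoverOf X α}, (Dcov X α : ℕ∞)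

/-- The join `⋁_{g ∈ F} (σ g)⁻¹ α` of the pullbacks of a finite cover along an action. -/
noncomputable def FCover {H : Type*} (σ : H → Y → Y) (F : Finset H) (α : Finset (Set Y)) :
    Finset (Set Y) :=
  letI := Classical.decEq H
  letI := Classical.decEq (Set Y)
  (F.pi fun _ => α).image fun f => ⋂ g, ⋂ (h : g ∈ F), σ g ⁻¹' f g h

/-- Mean topological dimension of `X` with respect to an action `σ` of `G`,
computed along the Følner sequence `Fo`. -/
noncomputable def mdim {H : Type*} (σ : H → Y → Y) (X : Set Y) (Fo : ℕ → Finset H) : ℝ≥0∞ :=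
  ⨆ α ∈ {α : Finset (Set Y) | IsOpenCoverOf X α},
    Filter.limsup
      (fun n => (Dcov X (FCover σ (Fo n) α) : ℝ≥0∞) / ((Fo n).card : ℝ≥0∞))
      Filter.atTop

end Dim

/-- A polyhedron: a finite union of simplices (convex hulls of finite sets) in a
Euclidean space. -/
def IsPolyhedron {N : ℕ} (P : Set (EuclideanSpace ℝ (Fin N))) : Prop :=
  ∃ S : Finset (Finset (EuclideanSpace ℝ (Fin N))),
    P = ⋃ s ∈ S, convexHull ℝ (s : Set (EuclideanSpace ℝ (Fin N)))

/-- The upper (Banach) density of a subset of an amenable group. -/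
noncomputable def upperDensity (G : Type*) [Group G] (J : Set G) : ℝ :=
  sSup {r : ℝ | ∃ Fo : ℕ → Finset G, IsFolnerSeq G Fo ∧
    r = Filter.limsup (fun n => ((J ∩ (Fo n : Set G)).ncard : ℝ) / (Fo n).card) Filter.atTop}



lemma kBoundary_mono {G : Type*} [Group G] {A K K' : Finset G} (h : K ⊆ K') :
    kBoundary A K ⊆ kBoundary A K' := by
  rintro g ⟨⟨k, hk, hkg⟩, ⟨k', hk', hkg'⟩⟩
  exact ⟨⟨k, h hk, hkg⟩, ⟨k', h hk', hkg'⟩⟩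

lemma kBoundary_finite {G : Type*} [Group G] (A K : Finset G) :
    (kBoundary A K).Finite := by
  apply Set.Finite.subset (Set.Finite.biUnion K.finite_toSet
    (fun k _ => (A.finite_toSet.preimage ((mul_right_injective k).injOn))))
  rintro g ⟨⟨k, hk, hkg⟩, -⟩
  exact Set.mem_biUnion hk hkg

/-- An irreducible tiling has, in every sufficiently invariant
finite set, at least `n` distinct tiles of each shape. -/
theorem irreducible_many_tiles
    {G : Type*} [Group G] [Infinite G] (hG : IsAmenable G)
    (T : FiniteTiling G) (hirr : T.IsIrreducible) :
    ∀ S₀ ∈ T.shapes, ∀ n : ℕ, ∃ (T₀ : Finset G) (ε : ℝ), 0 < ε ∧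
      ∀ F : Finset G, InvariantSet F T₀ ε →
        ∃ ts : Finset (Set G), n ≤ ts.card ∧
          ∀ t ∈ ts, t ∈ T.tiles ∧ (∃ c : G, t = (S₀ : Set G) * {c}) ∧ t ⊆ (F : Set G) := by
  classical
  intro S₀ hS₀ n
  induction n with
  | zero =>
    exact ⟨∅, 1, one_pos, fun F _ => ⟨∅, by simp, by simp⟩⟩
  | succ n ih =>
    obtain ⟨T₀n, εn, hεn, hn⟩ := ih
    obtain ⟨T₀, ε, hε, hirr'⟩ := hirr
    have hs1 : 1 ≤ S₀.card := Finset.card_pos.mpr ⟨1, T.one_mem_shape S₀ hS₀⟩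
    set Cn : ℝ := (T₀n.card : ℝ) * S₀.card with hCn
    have hCn0 : 0 ≤ Cn := by positivity
    obtain ⟨M, hM⟩ := exists_nat_ge (2 * (Cn + εn * S₀.card) / εn)
    obtain ⟨D, hD⟩ := Infinite.exists_subset_card_eq G M
    set K : Finset G := insert 1 (T₀ ∪ T₀n ∪ D) with hK
    set ε' : ℝ := min (min ε (εn / 2)) (1 / (M + 1)) with hε'def
    have hε' : 0 < ε' := by
      apply lt_min (lt_min hε (by linarith))
      positivity
    refine ⟨K, ε', hε', fun F hF => ?_⟩
    have hBfin : (kBoundary F K).Finite := kBoundary_finite F K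
    have hF' : ((kBoundary F K).ncard : ℝ) < ε' * F.card := hF
    have hFpos : 0 < (F.card : ℝ) := by
      by_contra h
      push_neg at h
      have : ε' * F.card ≤ 0 := mul_nonpos_of_nonneg_of_nonpos hε'.le h
      have h0 : (0 : ℝ) ≤ ((kBoundary F K).ncard : ℝ) := Nat.cast_nonneg _
      linarith
    -- F is large: M ≤ F.card
    have hMF : (M : ℝ) ≤ F.card := by
      by_contra hlt
      push_neg at hlt
      have hsmall : ((kBoundary F K).ncard : ℝ) < 1 := by
        have h1 : ε' ≤ 1 / (M + 1) := min_le_right _ _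
        have h2 : ε' * F.card < (1 / (M + 1)) * (M + 1) := by
          have : (F.card : ℝ) < M + 1 := by linarith
          calc ε' * F.card ≤ (1 / (M + 1)) * F.card :=
                mul_le_mul_of_nonneg_right h1 hFpos.le
            _ < (1 / (M + 1)) * (M + 1) := by
                apply mul_lt_mul_of_pos_left this; positivity
        have h3 : (1 / ((M : ℝ) + 1)) * (M + 1) = 1 := by
          field_simp
        linarith
      have hB0 : (kBoundary F K).ncard = 0 := by
        exact_mod_cast Nat.lt_one_iff.mp (by exact_mod_cast hsmall)
      have hBempty : kBoundary F K = ∅ := (Set.ncard_eq_zero hBfin).mp hB0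
      obtain ⟨c, hc⟩ := Finset.card_pos.mp (by exact_mod_cast hFpos)
      have h1K : (1 : G) ∈ K := Finset.mem_insert_self _ _
      have hstep : ∀ k ∈ K, k * c ∈ F := by
        intro k hk
        by_contra hkc
        have : c ∈ kBoundary F K := ⟨⟨1, h1K, by simpa⟩, ⟨k, hk, hkc⟩⟩
        rw [hBempty] at this
        exact this
      have himg : K.image (fun k => k * c) ⊆ F := by
        intro x hx
        obtain ⟨k, hk, rfl⟩ := Finset.mem_image.mp hx
        exact hstep k hk
      have hcard : K.card ≤ F.card := by
        rw [← Finset.card_image_of_injective K (mul_left_injective c)]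
        exact Finset.card_le_card himg
      have hDK : D ⊆ K := fun d hd =>
        Finset.mem_insert_of_mem (Finset.mem_union_right _ hd)
      have : M ≤ F.card := hD ▸ le_trans (Finset.card_le_card hDK) hcard
      exact absurd (by exact_mod_cast this) (not_le.mpr hlt)
    -- F is (T₀, ε)-invariant
    have hT₀K : T₀ ⊆ K := fun x hx =>
      Finset.mem_insert_of_mem (Finset.mem_union_left _ (Finset.mem_union_left _ hx))
    have hT₀nK : T₀n ⊆ K := fun x hx =>
      Finset.mem_insert_of_mem (Finset.mem_union_left _ (Finset.mem_union_right _ hx))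
    have hFε : InvariantSet F T₀ ε := by
      have hle : ((kBoundary F T₀).ncard : ℝ) ≤ (kBoundary F K).ncard := by
        exact_mod_cast Set.ncard_le_ncard (kBoundary_mono hT₀K) hBfin
      have : ε' ≤ ε := le_trans (min_le_left _ _) (min_le_left _ _)
      calc ((kBoundary F T₀).ncard : ℝ) ≤ (kBoundary F K).ncard := hle
        _ < ε' * F.card := hF'
        _ ≤ ε * F.card := mul_le_mul_of_nonneg_right this hFpos.le
    obtain ⟨c, hc, hcF⟩ := hirr' F hFε S₀ hS₀
    set tF : Finset G := S₀.image (fun a => a * c) with htF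
    have htFcoe : (tF : Set G) = (S₀ : Set G) * {c} := by
      rw [Set.mul_singleton]
      simp [htF]
    have htFsub : tF ⊆ F := by
      rw [← Finset.coe_subset, htFcoe]
      exact hcF
    have htFcard : tF.card = S₀.card :=
      Finset.card_image_of_injective _ (mul_left_injective c)
    set F' : Finset G := F \ tF with hF'def
    have hF'card : (F'.card : ℝ) = F.card - S₀.card := by
      rw [hF'def, Finset.card_sdiff_of_subset htFsub, htFcard]
      have := Finset.card_le_card htFsub
      rw [htFcard] at this
      push_cast [Nat.cast_sub this]
      ring
    -- boundary estimate for F'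
    set E : Finset G := (T₀n ×ˢ tF).image (fun p => p.1⁻¹ * p.2) with hE
    have hEcard : (E.card : ℝ) ≤ Cn := by
      have := Finset.card_image_le (s := T₀n ×ˢ tF) (f := fun p => p.1⁻¹ * p.2)
      rw [Finset.card_product, htFcard] at this
      calc (E.card : ℝ) ≤ (T₀n.card * S₀.card : ℕ) := by exact_mod_cast this
        _ = Cn := by push_cast [hCn]; ring
    have hBsub : kBoundary F' T₀n ⊆ kBoundary F K ∪ (E : Set G) := by
      rintro g ⟨⟨k₁, hk₁, hk₁g⟩, ⟨k₂, hk₂, hk₂g⟩⟩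
      have hk₁gF : k₁ * g ∈ F := (Finset.mem_sdiff.mp hk₁g).1
      by_cases hc2 : k₂ * g ∈ F
      · have hk₂t : k₂ * g ∈ tF := by
          by_contra h
          exact hk₂g (Finset.mem_sdiff.mpr ⟨hc2, h⟩)
        right
        have : g = k₂⁻¹ * (k₂ * g) := by group
        rw [this]
        exact_mod_cast Finset.mem_image.mpr
          ⟨(k₂, k₂ * g), Finset.mem_product.mpr ⟨hk₂, hk₂t⟩, rfl⟩
      · exact Or.inl ⟨⟨k₁, hT₀nK hk₁, hk₁gF⟩, ⟨k₂, hT₀nK hk₂, hc2⟩⟩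
    have hB'card : ((kBoundary F' T₀n).ncard : ℝ) < ε' * F.card + Cn := by
      have h1 : (kBoundary F' T₀n).ncard ≤ (kBoundary F K ∪ (E : Set G)).ncard :=
        Set.ncard_le_ncard hBsub (hBfin.union E.finite_toSet)
      have h2 : (kBoundary F K ∪ (E : Set G)).ncard ≤
          (kBoundary F K).ncard + (E : Set G).ncard :=
        Set.ncard_union_le _ _
      have h3 : ((E : Set G)).ncard = E.card := Set.ncard_coe_finset E
      have : ((kBoundary F' T₀n).ncard : ℝ) ≤ (kBoundary F K).ncard + E.card := by
        exact_mod_cast le_trans h1 (by rw [← h3]; exact h2)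
      linarith
    have hFbig : 2 * (Cn + εn * S₀.card) ≤ εn * F.card := by
      have h1 : 2 * (Cn + εn * S₀.card) / εn ≤ F.card := le_trans hM hMF
      calc 2 * (Cn + εn * S₀.card) = εn * (2 * (Cn + εn * S₀.card) / εn) := by
            field_simp
        _ ≤ εn * F.card := mul_le_mul_of_nonneg_left h1 hεn.le
    have hF'inv : InvariantSet F' T₀n εn := by
      show ((kBoundary F' T₀n).ncard : ℝ) < εn * F'.card
      rw [hF'card]
      have hε'2 : ε' ≤ εn / 2 := le_trans (min_le_left _ _) (min_le_right _ _)
      have : ε' * F.card ≤ (εn / 2) * F.card :=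
        mul_le_mul_of_nonneg_right hε'2 hFpos.le
      nlinarith
    obtain ⟨ts, hts, htsp⟩ := hn F' hF'inv
    set t : Set G := (S₀ : Set G) * {c} with ht
    have hct : c ∈ t := by
      rw [ht, Set.mul_singleton]
      exact ⟨1, by exact_mod_cast T.one_mem_shape S₀ hS₀, one_mul c⟩
    have hcF' : c ∉ (F' : Set G) := by
      intro h
      have : c ∈ F' := by exact_mod_cast h
      have hct' : c ∈ tF := by
        rw [← Finset.mem_coe, htFcoe]; exact hct
      exact (Finset.mem_sdiff.mp this).2 hct'
    have htnotin : t ∉ ts := by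
      intro h
      exact hcF' ((htsp t h).2.2 hct)
    refine ⟨insert t ts, ?_, ?_⟩
    · rw [Finset.card_insert_of_notMem htnotin]
      omega
    · intro u hu
      rcases Finset.mem_insert.mp hu with rfl | hu
      · exact ⟨hc, ⟨c, rfl⟩, hcF⟩
      · obtain ⟨h1, h2, h3⟩ := htsp u hu
        refine ⟨h1, h2, h3.trans ?_⟩
        rw [hF'def]
        exact_mod_cast Finset.sdiff_subset
end

section
/- Let G be an infinite countable amenable group and let T₁, T₂ be finite tilings of G such that T₂ is primely congruent with T₁ (every tile of T₂ is a union of tiles of T₁, and each shape of T₂ is partitioned by shapes of T₁ in a unique way). Then the subshift (X_{T₁}, G) is a topological factor of (X_{T₂}, G). -/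
open Filter Topology Pointwise ENNReal

variable {G : Type*} [Group G]

/-! The factor map is a sliding block code. A point of `X_{T₂}` records the shape `S` of each
`T₂`-tile at its center `h`; the code writes the `T₁`-shape `S₁` at `g` whenever the translate
`S₁ g h⁻¹` is a piece of the master partition of `S`. Prime congruence makes this partition the
same for every center of `S`, so the code sends `T₂.point` to `T₁.point`. It only reads a finite
window, hence is continuous; it commutes with the shift, and `X_{T₂}` is compact, so it maps the
orbit closure of `T₂.point` onto that of `T₁.point`. -/

theorem DependsOn.continuous_of_finite {ι A B : Type*} [TopologicalSpace A] [DiscreteTopology A]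
    [TopologicalSpace B] [Nonempty B] {f : (ι → A) → B} {s : Set ι} (hf : DependsOn f s)
    (hs : s.Finite) : Continuous f := by
  obtain ⟨g, rfl⟩ := dependsOn_iff_exists_comp.1 hf
  have := hs.to_subtype
  exact continuous_of_discreteTopology.comp (continuous_pi fun i => continuous_apply _)

theorem isCompact_closure_of_forall_apply_mem {ι A : Type*} [TopologicalSpace A] [T2Space A]
    {s : Set (ι → A)} {K : Set A} (hK : IsCompact K) (hs : ∀ x ∈ s, ∀ i, x i ∈ K) :
    IsCompact (closure s) :=
  (isCompact_univ_pi fun _ => hK).of_isClosed_subset isClosed_closure <|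
    closure_minimal (fun x hx i _ => hs x hx i) (isClosed_set_pi fun _ _ => hK.isClosed)

open Classical in
noncomputable def chooseOption {α : Type*} (p : α → Prop) : Option α :=
  if h : ∃ a, p a then some h.choose else none

theorem chooseOption_eq_some_iff {α : Type*} {p : α → Prop} (hp : ∀ a b, p a → p b → a = b)
    {a : α} : chooseOption p = some a ↔ p a := by
  unfold chooseOption
  split_ifs with h
  · exact ⟨fun e => Option.some_injective _ e ▸ h.choose_spec,
      fun ha => congrArg some (hp _ _ h.choose_spec ha)⟩
  · exact ⟨nofun, fun ha => absurd ⟨a, ha⟩ h⟩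

namespace Set

theorem mul_singleton_mul_singleton (s : Set G) (a b : G) : s * {a} * {b} = s * {a * b} := by
  rw [mul_assoc, singleton_mul_singleton]

theorem mul_singleton_mul_inv_singleton (s : Set G) (a : G) : s * {a} * {a⁻¹} = s := by
  rw [mul_singleton_mul_singleton, mul_inv_cancel, singleton_one, mul_one]

theorem mul_inv_singleton_mul_singleton (s : Set G) (a : G) : s * {a⁻¹} * {a} = s := by
  rw [mul_singleton_mul_singleton, inv_mul_cancel, singleton_one, mul_one]

theorem mul_singleton_injective (a : G) : Function.Injective fun s : Set G => s * {a} :=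
  fun s t h => by
    rw [← mul_singleton_mul_inv_singleton s a, ← mul_singleton_mul_inv_singleton t a]
    exact congrArg (· * {a⁻¹}) h

theorem mem_mul_singleton_self {s : Set G} (hs : (1 : G) ∈ s) (g : G) : g ∈ s * {g} := by
  simpa using mul_mem_mul hs (mem_singleton g)

end Set

instance : DiscreteTopology (Option (Finset G)) := ⟨rfl⟩

namespace FiniteTiling

variable (T : FiniteTiling G)

theorem mem_tile_self {S : Finset G} (hS : S ∈ T.shapes) (g : G) : g ∈ (S : Set G) * {g} :=
  Set.mem_mul_singleton_self (T.one_mem_shape S hS) g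

theorem shape_eq_of_mem_center {S S' : Finset G} (hS : S ∈ T.shapes) (hS' : S' ∈ T.shapes)
    {g : G} (hg : g ∈ T.center S) (hg' : g ∈ T.center S') : S = S' := by
  obtain ⟨_, _, huniq⟩ := T.covers g
  have := (huniq _ ⟨hg, T.mem_tile_self hS g⟩).trans (huniq _ ⟨hg', T.mem_tile_self hS' g⟩).symm
  exact Finset.coe_injective (Set.mul_singleton_injective g this)

theorem point_eq_chooseOption (g : G) :
    T.point g = chooseOption fun S => S ∈ T.shapes ∧ g ∈ T.center S := by
  unfold point chooseOption
  congr

theorem point_eq_some_iff {g : G} {S : Finset G} :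
    T.point g = some S ↔ S ∈ T.shapes ∧ g ∈ T.center S := by
  rw [point_eq_chooseOption]
  exact chooseOption_eq_some_iff fun _ _ ha hb => T.shape_eq_of_mem_center ha.1 hb.1 ha.2 hb.2

theorem isCompact_subshift : IsCompact T.subshift := by
  refine isCompact_closure_of_forall_apply_mem
    ((T.shapes.finite_toSet.image some).insert none).isCompact ?_
  rintro _ ⟨c, rfl⟩ g
  cases hp : T.point (g * c) with
  | none => exact Or.inl hp
  | some S => exact Or.inr ⟨S, ((T.point_eq_some_iff).1 hp).1, hp.symm⟩

end FiniteTiling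

section Refinement

variable (T₁ T₂ : FiniteTiling G)

def masterPartition (S : Finset G) : Set (Set G) :=
  {u | ∃ c ∈ T₂.center S, ∃ t ∈ T₁.tiles, t ⊆ (S : Set G) * {c} ∧ u = t * {c⁻¹}}

theorem subset_of_mem_masterPartition {S : Finset G} {u : Set G}
    (hu : u ∈ masterPartition T₁ T₂ S) : u ⊆ S := by
  obtain ⟨c, -, t, -, htS, rfl⟩ := hu
  simpa only [Set.mul_singleton_mul_inv_singleton] using Set.mul_subset_mul_right htS (t := {c⁻¹})

theorem PrimelyCongruent.mem_masterPartition_iff {T₁ T₂ : FiniteTiling G}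
    (h : PrimelyCongruent T₁ T₂) {S : Finset G} (hS : S ∈ T₂.shapes) {c : G}
    (hc : c ∈ T₂.center S) {u : Set G} :
    u ∈ masterPartition T₁ T₂ S ↔ ∃ t ∈ T₁.tiles, t ⊆ (S : Set G) * {c} ∧ u = t * {c⁻¹} :=
  ⟨fun ⟨c', hc', hu⟩ => (h.2 S hS c c' hc hc').ge hu, fun hu => ⟨c, hc, hu⟩⟩

def IsRefinedShape (x : G → Option (Finset G)) (g : G) (S₁ : Finset G) : Prop :=
  S₁ ∈ T₁.shapes ∧ ∃ h S, x h = some S ∧ S ∈ T₂.shapes ∧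
    (S₁ : Set G) * {g * h⁻¹} ∈ masterPartition T₁ T₂ S

noncomputable def refinementMap (x : G → Option (Finset G)) : G → Option (Finset G) :=
  fun g => chooseOption (IsRefinedShape T₁ T₂ x g)

theorem isRefinedShape_shiftAct (x : G → Option (Finset G)) (c g : G) :
    IsRefinedShape T₁ T₂ (shiftAct c x) g = IsRefinedShape T₁ T₂ x (g * c) := by
  funext S₁
  refine propext (and_congr_right fun _ => ⟨?_, ?_⟩)
  · rintro ⟨h, S, hx, hS, hm⟩
    exact ⟨h * c, S, hx, hS, by rwa [mul_inv_rev, mul_assoc g c, mul_inv_cancel_left]⟩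
  · rintro ⟨h, S, hx, hS, hm⟩
    refine ⟨h * c⁻¹, S, by simpa only [shiftAct, inv_mul_cancel_right] using hx, hS, ?_⟩
    rwa [mul_inv_rev, inv_inv, ← mul_assoc]

theorem refinementMap_shiftAct (x : G → Option (Finset G)) (c : G) :
    refinementMap T₁ T₂ (shiftAct c x) = shiftAct c (refinementMap T₁ T₂ x) :=
  funext fun g => congrArg chooseOption (isRefinedShape_shiftAct T₁ T₂ x c g)

theorem isRefinedShape_point {T₁ T₂ : FiniteTiling G} (h : PrimelyCongruent T₁ T₂) (g : G) :
    IsRefinedShape T₁ T₂ T₂.point g = fun S₁ => S₁ ∈ T₁.shapes ∧ g ∈ T₁.center S₁ := by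
  funext S₁
  refine propext (and_congr_right fun hS₁ => ⟨?_, fun hg => ?_⟩)
  · rintro ⟨k, S, hk, hS, hm⟩
    obtain ⟨t, ht, -, hte⟩ := (h.mem_masterPartition_iff hS ((T₂.point_eq_some_iff).1 hk).2).1 hm
    have : (S₁ : Set G) * {g} = t := by
      rw [← Set.mul_inv_singleton_mul_singleton t k, ← hte, Set.mul_singleton_mul_singleton,
        inv_mul_cancel_right]
    show (S₁ : Set G) * {g} ∈ T₁.tiles
    rwa [this]
  · obtain ⟨_, ⟨ht₂, hgt₂⟩, -⟩ := T₂.covers g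
    obtain ⟨S, hS, c, rfl⟩ := T₂.tile_shape _ ht₂
    have hsub : (S₁ : Set G) * {g} ⊆ (S : Set G) * {c} :=
      h.1 _ hg _ ht₂ ⟨g, T₁.mem_tile_self hS₁ g, hgt₂⟩
    refine ⟨c, S, (T₂.point_eq_some_iff).2 ⟨hS, ht₂⟩, hS, c, ht₂, _, hg, hsub, ?_⟩
    rw [Set.mul_singleton_mul_singleton]

theorem refinementMap_point {T₁ T₂ : FiniteTiling G} (h : PrimelyCongruent T₁ T₂) :
    refinementMap T₁ T₂ T₂.point = T₁.point :=
  funext fun g => (congrArg chooseOption (isRefinedShape_point h g)).trans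
    (T₁.point_eq_chooseOption g).symm

def window (g : G) : Set G := (fun h => g * h⁻¹) ⁻¹' ⋃ S ∈ T₂.shapes, (S : Set G)

theorem finite_window (g : G) : (window T₂ g).Finite :=
  (T₂.shapes.finite_toSet.biUnion fun S _ => S.finite_toSet).preimage
    ((mul_right_injective g).comp inv_injective).injOn

theorem IsRefinedShape.of_eqOn_window {x y : G → Option (Finset G)} {g : G} {S₁ : Finset G}
    (hxy : ∀ h ∈ window T₂ g, x h = y h) (hx : IsRefinedShape T₁ T₂ x g S₁) :
    IsRefinedShape T₁ T₂ y g S₁ := by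
  obtain ⟨hS₁, k, S, hk, hS, hm⟩ := hx
  have hk_mem : k ∈ window T₂ g :=
    Set.mem_biUnion hS (subset_of_mem_masterPartition T₁ T₂ hm (T₁.mem_tile_self hS₁ _))
  exact ⟨hS₁, k, S, hxy k hk_mem ▸ hk, hS, hm⟩

theorem dependsOn_refinementMap_apply (g : G) :
    DependsOn (fun x => refinementMap T₁ T₂ x g) (window T₂ g) :=
  fun _ _ hxy => congrArg chooseOption <| funext fun _ => propext
    ⟨.of_eqOn_window T₁ T₂ hxy, .of_eqOn_window T₁ T₂ fun h hh => (hxy h hh).symm⟩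

theorem continuous_refinementMap : Continuous (refinementMap T₁ T₂) :=
  continuous_pi fun g =>
    (dependsOn_refinementMap_apply T₁ T₂ g).continuous_of_finite (finite_window T₂ g)

end Refinement

theorem primely_congruent_factor_general
    {G : Type*} [Group G]
    (T₁ T₂ : FiniteTiling G) (h : PrimelyCongruent T₁ T₂) :
    ∃ π : (G → Option (Finset G)) → (G → Option (Finset G)),
      ContinuousOn π T₂.subshift ∧ π '' T₂.subshift = T₁.subshift ∧
      ∀ x ∈ T₂.subshift, ∀ c : G, π (shiftAct c x) = shiftAct c (π x) := by
  have hπ := (continuous_refinementMap T₁ T₂).continuousOn (s := T₂.subshift)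
  refine ⟨refinementMap T₁ T₂, hπ, ?_, fun x _ c => refinementMap_shiftAct T₁ T₂ x c⟩
  have horbit : refinementMap T₁ T₂ '' Set.range (fun c => shiftAct c T₂.point) =
      Set.range fun c => shiftAct c T₁.point := by
    rw [← Set.range_comp]
    congr 1
    funext c
    rw [Function.comp_apply, refinementMap_shiftAct, refinementMap_point h]
  rw [FiniteTiling.subshift, image_closure_of_isCompact T₂.isCompact_subshift hπ, horbit]
  rfl

/-- If `T₂` is primely congruent with `T₁` then `X_{T₁}` is a
topological factor of `X_{T₂}`. -/
theorem primely_congruent_factor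
    {G : Type*} [Group G] [Countable G] [Infinite G] (hG : IsAmenable G)
    (T₁ T₂ : FiniteTiling G) (h : PrimelyCongruent T₁ T₂) :
    ∃ π : (G → Option (Finset G)) → (G → Option (Finset G)),
      ContinuousOn π T₂.subshift ∧ π '' T₂.subshift = T₁.subshift ∧
      ∀ x ∈ T₂.subshift, ∀ c : G, π (shiftAct c x) = shiftAct c (π x) :=
  primely_congruent_factor_general T₁ T₂ h
end
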